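/- arXiv:2308.00522 — 2 statements merged into one kernel-verified Lean document; each statement's English description precedes it below -/
import Mathlib

section
/- Let α > 0, a > 0, 0 < β₁ < 1, G > 0, L > 0, and let η > 0 satisfy η < 1/(2·√(α(1−β₁)(1+1/a))·G·L). If γ > 0 satisfies the quadratic equation 4β₁(1−β₁)G²L²·γ² + (1+a−β₁)·γ − α(1+a)(1+1/a)·η² = 0, then γ < 1/(4(1−β₁)G²L²). -/
/-! The quadratic in `γ` is increasing on `[0, ∞)`, and at `γ = 1/B` with `B = 4(1−β₁)G²L²` it
takes the value `((1+a) − B·α(1+a)(1+1/a)η²)/B`, which the step-size condition makes positive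
(squared, it reads `4α(1−β₁)(1+1/a)G²L²η² < 1`). -/

theorem lt_of_quadratic_eq_zero_of_quadratic_pos {A b c x t : ℝ} (hA : 0 ≤ A) (hb : 0 ≤ b)
    (ht : 0 ≤ t) (hx : A * x ^ 2 + b * x + c = 0) (hpos : 0 < A * t ^ 2 + b * t + c) :
    x < t := by
  by_contra! htx
  have : A * t ^ 2 + b * t + c ≤ A * x ^ 2 + b * x + c := by gcongr
  linarith

theorem sq_mul_lt_one_of_lt_one_div {η d : ℝ} (hη : 0 ≤ η) (hd : 0 < d) (h : η < 1 / d) :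
    (η * d) ^ 2 < 1 := by
  have hlt : η * d < 1 := (lt_div_iff₀ hd).mp h
  nlinarith [mul_nonneg hη hd.le]

theorem quadratic_root_below_threshold_general (α a β₁ G L η γ : ℝ)
    (hα : 0 < α) (ha : 0 < a) (hβ0 : 0 < β₁) (hβ1 : β₁ < 1)
    (hG : 0 < G) (hL : 0 < L) (hη : 0 < η)
    (hηlt : η < 1 / (2 * Real.sqrt (α * (1 - β₁) * (1 + 1 / a)) * G * L))
    (heq : 4 * β₁ * (1 - β₁) * G ^ 2 * L ^ 2 * γ ^ 2 + (1 + a - β₁) * γ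
      - α * (1 + a) * (1 + 1 / a) * η ^ 2 = 0) :
    γ < 1 / (4 * (1 - β₁) * G ^ 2 * L ^ 2) := by
  set s := α * (1 - β₁) * (1 + 1 / a)
  set B := 4 * (1 - β₁) * G ^ 2 * L ^ 2
  set C := α * (1 + a) * (1 + 1 / a) * η ^ 2
  have hβ : 0 < 1 - β₁ := sub_pos.mpr hβ1
  have hs_pos : 0 < s := by positivity
  have hB_pos : 0 < B := by positivity
  have hstep : 4 * s * G ^ 2 * L ^ 2 * η ^ 2 < 1 := by
    have h := sq_mul_lt_one_of_lt_one_div hη.le (by positivity) hηlt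
    calc 4 * s * G ^ 2 * L ^ 2 * η ^ 2
        = (η * (2 * Real.sqrt s * G * L)) ^ 2 := by
          rw [mul_pow, mul_pow, mul_pow, mul_pow, Real.sq_sqrt hs_pos.le]; ring
      _ < 1 := h
  have hCB : C * B < 1 + a := by
    calc C * B = (1 + a) * (4 * s * G ^ 2 * L ^ 2 * η ^ 2) := by ring
      _ < (1 + a) * 1 := by gcongr
      _ = 1 + a := mul_one _
  refine lt_of_quadratic_eq_zero_of_quadratic_pos (A := β₁ * B) (b := 1 + a - β₁) (c := -C)
    (by positivity) (by linarith) (by positivity) (by linear_combination heq) ?_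
  have hvalue : β₁ * B * (1 / B) ^ 2 + (1 + a - β₁) * (1 / B) + -C = (1 + a - C * B) / B := by
    field_simp
    ring
  rw [hvalue]
  exact div_pos (by linarith) hB_pos

/-- Under the step-size condition `η < 1/(2·√(α(1−β₁)(1+1/a))·G·L)`, the positive root of
`4β₁(1−β₁)G²L²·γ² + (1+a−β₁)·γ − α(1+a)(1+1/a)·η² = 0` satisfies
`γ < 1/(4(1−β₁)G²L²)`. -/
theorem quadratic_root_below_threshold (α a β₁ G L η γ : ℝ)
    (hα : 0 < α) (ha : 0 < a) (hβ0 : 0 < β₁) (hβ1 : β₁ < 1)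
    (hG : 0 < G) (hL : 0 < L) (hη : 0 < η)
    (hηlt : η < 1 / (2 * Real.sqrt (α * (1 - β₁) * (1 + 1 / a)) * G * L))
    (hγ : 0 < γ)
    (heq : 4 * β₁ * (1 - β₁) * G ^ 2 * L ^ 2 * γ ^ 2 + (1 + a - β₁) * γ
      - α * (1 + a) * (1 + 1 / a) * η ^ 2 = 0) :
    γ < 1 / (4 * (1 - β₁) * G ^ 2 * L ^ 2) :=
  quadratic_root_below_threshold_general α a β₁ G L η γ hα ha hβ0 hβ1 hG hL hη hηlt heq
end

section
/- Let a > 0, 0 < β₁ < 1, α > 0, and b, c, d, e ≥ 0 be real constants. Let (ε_k)_{k=0}^{K} and (S_k)_{k=0}^{K} be nonnegative real sequences such that for all 1 ≤ k ≤ K: ε_k ≤ (1+a)·ε_{k−1} + α·b·S_k + c·k and S_k ≤ β₁·S_{k−1} + d·ε_k + e·k. Suppose γ > 0 satisfies β₁·d·γ² + (1+a−β₁)·γ − α(1+a)·b = 0 and γ·d < 1. Define q = γβ₁/(1+a), p = (1+a)/(1−γd), and C = (c + γe)/(1−γd). Then for all 1 ≤ k ≤ K: ε_k + q·S_k ≤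 p·(ε_{k−1} + q·S_{k−1}) + k·C. -/
/-- Lyapunov-type recursion: if `ε_k ≤ (1+a)ε_{k−1} + αb·S_k + c·k` and
`S_k ≤ β₁S_{k−1} + d·ε_k + e·k` for nonnegative sequences, and `γ > 0` solves
`β₁dγ² + (1+a−β₁)γ − α(1+a)b = 0` with `γd < 1`, then with
`q = γβ₁/(1+a)`, `p = (1+a)/(1−γd)` and `C = (c+γe)/(1−γd)` one has
`ε_k + q·S_k ≤ p·(ε_{k−1} + q·S_{k−1}) + k·C` for all `1 ≤ k ≤ K`. -/
theorem lyapunov_recursion (a β₁ α b c d e : ℝ) (K : ℕ) (ε S : ℕ → ℝ)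
    (ha : 0 < a) (hβ0 : 0 < β₁) (hβ1 : β₁ < 1) (hα : 0 < α)
    (hb : 0 ≤ b) (hc : 0 ≤ c) (hd : 0 ≤ d) (he : 0 ≤ e)
    (hεnn : ∀ k ≤ K, 0 ≤ ε k) (hSnn : ∀ k ≤ K, 0 ≤ S k)
    (hεrec : ∀ k, 1 ≤ k → k ≤ K → ε k ≤ (1 + a) * ε (k - 1) + α * b * S k + c * k)
    (hSrec : ∀ k, 1 ≤ k → k ≤ K → S k ≤ β₁ * S (k - 1) + d * ε k + e * k)
    (γ : ℝ) (hγ : 0 < γ)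
    (hquad : β₁ * d * γ ^ 2 + (1 + a - β₁) * γ - α * (1 + a) * b = 0)
    (hγd : γ * d < 1) :
    ∀ k, 1 ≤ k → k ≤ K →
      ε k + (γ * β₁ / (1 + a)) * S k ≤
        ((1 + a) / (1 - γ * d)) * (ε (k - 1) + (γ * β₁ / (1 + a)) * S (k - 1))
          + k * ((c + γ * e) / (1 - γ * d)) := by
  intro k hk1 hkK
  have h1 := hεrec k hk1 hkK
  have h2 := hSrec k hk1 hkK
  have hSk := hSnn k hkK
  have h1a : (0:ℝ) < 1 + a := by linarith
  have hden : (0:ℝ) < 1 - γ * d := by linarith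
  have key : γ * (1 + a) - α * (1 + a) * b = γ * β₁ * (1 - γ * d) := by
    linear_combination hquad
  have key2 : (γ * (1 + a) - α * (1 + a) * b) * S k = γ * β₁ * (1 - γ * d) * S k := by
    rw [key]
  have h2' : γ * S k ≤ γ * (β₁ * S (k - 1) + d * ε k + e * k) :=
    mul_le_mul_of_nonneg_left h2 hγ.le
  have H : (1 - γ * d) * (ε k + γ * β₁ / (1 + a) * S k) ≤
      (1 + a) * (ε (k - 1) + γ * β₁ / (1 + a) * S (k - 1)) + k * (c + γ * e) := by
    rw [div_mul_eq_mul_div, div_mul_eq_mul_div, ← sub_nonneg]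
    have expand : (1 + a) * (ε (k - 1) + γ * β₁ * S (k - 1) / (1 + a)) + ↑k * (c + γ * e) -
        (1 - γ * d) * (ε k + γ * β₁ * S k / (1 + a)) =
        ((1 + a) * ((1 + a) * ε (k - 1) + γ * β₁ * S (k - 1)) + (1 + a) * ↑k * (c + γ * e) -
          (1 - γ * d) * ((1 + a) * ε k + γ * β₁ * S k)) / (1 + a) := by
      field_simp
    rw [expand]
    apply div_nonneg _ h1a.le
    nlinarith [mul_le_mul_of_nonneg_left h1 h1a.le,
      mul_le_mul_of_nonneg_left h2' h1a.le, key2]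
  rw [show ((1 + a) / (1 - γ * d)) * (ε (k - 1) + (γ * β₁ / (1 + a)) * S (k - 1))
      + k * ((c + γ * e) / (1 - γ * d)) =
      ((1 + a) * (ε (k - 1) + (γ * β₁ / (1 + a)) * S (k - 1)) + k * (c + γ * e)) / (1 - γ * d)
      from by ring, le_div_iff₀ hden]
  nlinarith [H]
end
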